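/- If the semigroup S contains no nontrivial simple ideals, then the strong boundary of A(Ŝ) and the Shilov boundary of A(Ŝ) both coincide with the character group X. -/

import Mathlib

open Complex Topology Set

/-- The compact semigroup `Ŝ` of semicharacters of a discrete abelian monoid `S`:
nonzero homomorphisms into the multiplicative semigroup of the closed unit disc,
realized as the set of functions `ψ : S → ℂ` with `ψ 1 = 1`, multiplicative, and
of modulus at most one, endowed with the topology of pointwise convergence. -/
def Shat (S : Type*) [CommMonoid S] : Set (S → ℂ) :=
  {ψ | ψ 1 = 1 ∧ (∀ s t, ψ (s * t) = ψ s * ψ t) ∧ ∀ s, ‖ψ s‖ ≤ 1}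

/-- The group `X` of characters of `S`: semicharacters of modulus one. -/
def charGroup (S : Type*) [CommMonoid S] : Set (S → ℂ) :=
  {ψ | ψ ∈ Shat S ∧ ∀ s, ‖ψ s‖ = 1}

/-- `Ŝ₊`: the set of nonnegative semicharacters of `S`. -/
def ShatPos (S : Type*) [CommMonoid S] : Set (S → ℂ) :=
  {ψ | ψ ∈ Shat S ∧ ∀ s, (ψ s).im = 0 ∧ 0 ≤ (ψ s).re}

/-- `E(Ŝ)`: the set of idempotent semicharacters (taking only the values `0` and `1`). -/
def idemSC (S : Type*) [CommMonoid S] : Set (S → ℂ) :=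
  {ψ | ψ ∈ Shat S ∧ ∀ s, ψ s = 0 ∨ ψ s = 1}

/-- The modulus `|ψ|` of a semicharacter. -/
noncomputable def scMod {S : Type*} (ψ : S → ℂ) : S → ℂ :=
  fun s => ((‖ψ s‖ : ℝ) : ℂ)

/-- The power `ρ^z` of a nonnegative semicharacter `ρ` (with `0^z := 0`). -/
noncomputable def scPow {S : Type*} (ρ : S → ℂ) (z : ℂ) : S → ℂ :=
  fun s => if ρ s = 0 then 0 else ρ s ^ z

/-- A function `F` on `Ŝ` is generalized analytic on `Ŝ ∖ X` if for all
`ρ ∈ Ŝ₊ ∖ X` and `ψ ∈ Ŝ ∖ X` the map `z ↦ F (ρ^z ψ)` is analytic on the open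
right half-plane and continuous at `0` along `(0, ∞)`. -/
def GenAnalytic (S : Type*) [CommMonoid S] (F : (S → ℂ) → ℂ) : Prop :=
  ∀ ρ ∈ ShatPos S \ charGroup S, ∀ ψ ∈ Shat S \ charGroup S,
    DifferentiableOn ℂ (fun z : ℂ => F (scPow ρ z * ψ)) {z : ℂ | 0 < z.re} ∧
    ContinuousWithinAt (fun t : ℝ => F (scPow ρ (t : ℂ) * ψ)) (Set.Ioi (0 : ℝ)) 0

/-- Membership in the uniform algebra `A(Ŝ)`: continuous on `Ŝ` and generalized
analytic on `Ŝ ∖ X`. -/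
def MemA (S : Type*) [CommMonoid S] (F : (S → ℂ) → ℂ) : Prop :=
  ContinuousOn F (Shat S) ∧ GenAnalytic S F

/-- Peak sets of the algebra `A(Ŝ)`. -/
def IsPeakSetA (S : Type*) [CommMonoid S] (P : Set (S → ℂ)) : Prop :=
  P ⊆ Shat S ∧ IsClosed P ∧
    ∃ f, MemA S f ∧ (∀ ψ ∈ P, f ψ = 1) ∧ ∀ ψ ∈ Shat S \ P, ‖f ψ‖ < 1

/-- `p`-points of the algebra `A(Ŝ)`: points of `Ŝ` that are intersections of peak sets. -/
def IsPPointA (S : Type*) [CommMonoid S] (p : S → ℂ) : Prop :=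
  p ∈ Shat S ∧
    ∃ Ps : Set (Set (S → ℂ)), (∀ P ∈ Ps, IsPeakSetA S P) ∧ ⋂₀ Ps = {p}

/-- The strong boundary `Γ` of `A(Ŝ)`: the set of all `p`-points. -/
def strongBoundary (S : Type*) [CommMonoid S] : Set (S → ℂ) :=
  {ψ | IsPPointA S ψ}

/-- The coset `ρX` of the character group. -/
def cosetX (S : Type*) [CommMonoid S] (ρ : S → ℂ) : Set (S → ℂ) :=
  {φ | ∃ χ ∈ charGroup S, φ = ρ * χ}

/-- `E₀(Ŝ)`: idempotents `ρ₀` admitting `ρ₁ ∈ Ŝ₊` with `ρ₁ = 1` on `S(ρ₀)` and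
`0 < ρ₁ < 1` off `S(ρ₀)`. -/
def E0 (S : Type*) [CommMonoid S] : Set (S → ℂ) :=
  {ρ₀ | ρ₀ ∈ idemSC S ∧ ∃ ρ₁ ∈ ShatPos S,
    (∀ s, ρ₀ s ≠ 0 → ρ₁ s = 1) ∧ ∀ s, ρ₀ s = 0 → 0 < (ρ₁ s).re ∧ (ρ₁ s).re < 1}

/-- `θ`: the indicator function of `{e}`. -/
noncomputable def theta (S : Type*) [CommMonoid S] : S → ℂ :=
  ({1} : Set S).indicator 1

/-- A closed boundary of `A(Ŝ)`: a closed subset of `Ŝ` on which every function of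
`A(Ŝ)` attains its maximum modulus over `Ŝ`. -/
def IsClosedBoundaryA (S : Type*) [CommMonoid S] (B : Set (S → ℂ)) : Prop :=
  B ⊆ Shat S ∧ IsClosed B ∧
    ∀ f, MemA S f → ∃ ψ ∈ B, ∀ φ ∈ Shat S, ‖f φ‖ ≤ ‖f ψ‖

/-- The Shilov boundary of `A(Ŝ)`: the smallest closed boundary. -/
def shilovA (S : Type*) [CommMonoid S] : Set (S → ℂ) :=
  ⋂₀ {B | IsClosedBoundaryA S B}

/-- An ideal of the semigroup `S`: a nonempty proper subset stable under multiplication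
by `S`. -/
def IsIdealS (S : Type*) [CommMonoid S] (I : Set S) : Prop :=
  I.Nonempty ∧ I ≠ Set.univ ∧ ∀ s : S, ∀ a ∈ I, s * a ∈ I

/-- A simple ideal: an ideal whose complement is a subsemigroup. -/
def IsSimpleIdealS (S : Type*) [CommMonoid S] (I : Set S) : Prop :=
  IsIdealS S I ∧ ∀ a b : S, a ∉ I → b ∉ I → a * b ∉ I

/-!
Characters are p-points: `{ψ ∈ Ŝ | ψ s = χ s}` is a peak set, peaked by
`ψ ↦ (1 + conj (χ s) ψ s) / 2`, and these sets cut out `χ`. A p-point lies in every closed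
boundary, since otherwise a finite product of peak functions would have modulus `< 1` on the
boundary but `1` at the point. So it remains to show that `X` is a boundary.

If `ψ ∉ X` vanishes nowhere, write `ψ = |ψ| χ`; then `z ↦ f (|ψ|^z χ)` is analytic and bounded
on the right half-plane and maps the imaginary axis into `X`, so Phragmén–Lindelöf bounds
`‖f ψ‖` by `max_X ‖f‖`. If `ψ` vanishes somewhere, the absence of nontrivial simple ideals forces
`ψ` to be the indicator of `{e}` and makes every element of `S` divide a power of some
`s₀ ≠ e`. A Zorn argument then gives an additive `g ≥ 0` with `g s₀ = 1`, `ρ = exp (-g)` is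
`< 1` off `e`, and `ψ = lim ρ^t` as `t → ∞`, so the bound passes to the limit.
-/

open Filter

section MonoAddGraph

variable {S : Type*} [CommMonoid S]

/-- The graph of a partial additive map `S → ℝ`, monotone for divisibility, with `s₀ ↦ 1`;
`mono` makes it single-valued (`eq_of_mem`). -/
structure IsMonoAddGraph (s₀ : S) (G : Set (S × ℝ)) : Prop where
  one_mem : ((1 : S), (0 : ℝ)) ∈ G
  gen_mem : (s₀, (1 : ℝ)) ∈ G
  mul_mem : ∀ ⦃x y : S⦄ ⦃a b : ℝ⦄, (x, a) ∈ G → (y, b) ∈ G → (x * y, a + b) ∈ G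
  mono : ∀ ⦃x y : S⦄ ⦃a b : ℝ⦄, (x, a) ∈ G → (y, b) ∈ G → x ∣ y → a ≤ b

namespace IsMonoAddGraph

variable {s₀ : S} {G : Set (S × ℝ)}

theorem eq_of_mem (hG : IsMonoAddGraph s₀ G) {x : S} {a b : ℝ} (ha : (x, a) ∈ G)
    (hb : (x, b) ∈ G) : a = b :=
  (hG.mono ha hb dvd_rfl).antisymm (hG.mono hb ha dvd_rfl)

theorem pow_mem (hG : IsMonoAddGraph s₀ G) {x : S} {a : ℝ} (hx : (x, a) ∈ G) (n : ℕ) :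
    (x ^ n, n * a) ∈ G := by
  induction n with
  | zero => simpa using hG.one_mem
  | succ n ih => simpa [pow_succ, add_mul] using hG.mul_mem ih hx

theorem sUnion {c : Set (Set (S × ℝ))} (hc : ∀ G ∈ c, IsMonoAddGraph s₀ G)
    (hchain : IsChain (· ⊆ ·) c) (hne : c.Nonempty) : IsMonoAddGraph s₀ (⋃₀ c) := by
  have common : ∀ ⦃p q⦄, p ∈ ⋃₀ c → q ∈ ⋃₀ c → ∃ G ∈ c, p ∈ G ∧ q ∈ G := by
    rintro p q ⟨Gp, hGp, hp⟩ ⟨Gq, hGq, hq⟩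
    rcases hchain.total hGp hGq with hsub | hsub
    · exact ⟨Gq, hGq, hsub hp, hq⟩
    · exact ⟨Gp, hGp, hp, hsub hq⟩
  obtain ⟨G₁, hG₁⟩ := hne
  refine ⟨⟨G₁, hG₁, (hc G₁ hG₁).one_mem⟩, ⟨G₁, hG₁, (hc G₁ hG₁).gen_mem⟩, ?_, ?_⟩
  · intro x y a b hx hy
    obtain ⟨G, hG, hx, hy⟩ := common hx hy
    exact ⟨G, hG, (hc G hG).mul_mem hx hy⟩
  · intro x y a b hx hy hxy
    obtain ⟨G, hG, hx, hy⟩ := common hx hy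
    exact (hc G hG).mono hx hy hxy

theorem range_pow [IsCancelMul S] (hs₀ : ¬IsUnit s₀) :
    IsMonoAddGraph s₀ (Set.range fun n : ℕ => (s₀ ^ n, (n : ℝ))) := by
  refine ⟨⟨0, by simp⟩, ⟨1, by simp⟩, ?_, ?_⟩
  · rintro x y a b ⟨n, hn⟩ ⟨m, hm⟩
    obtain ⟨rfl, rfl⟩ := Prod.mk.inj hn
    obtain ⟨rfl, rfl⟩ := Prod.mk.inj hm
    exact ⟨n + m, by simp [pow_add]⟩
  · rintro x y a b ⟨n, hn⟩ ⟨m, hm⟩ hdvd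
    obtain ⟨rfl, rfl⟩ := Prod.mk.inj hn
    obtain ⟨rfl, rfl⟩ := Prod.mk.inj hm
    rw [Nat.cast_le]
    by_contra! hmn
    obtain ⟨k, rfl⟩ := Nat.exists_eq_add_of_lt hmn
    have : s₀ ^ m * s₀ ^ (k + 1) ∣ s₀ ^ m * 1 := by rwa [← pow_add, ← add_assoc, mul_one]
    rw [(IsLeftRegular.all _).dvd_cancel_left, ← isUnit_iff_dvd_one,
      isUnit_pow_iff k.succ_ne_zero] at this
    exact hs₀ this

theorem mul_sub_le_mul_sub [IsCancelMul S] (hG : IsMonoAddGraph s₀ G) {u x y x' y' : S}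
    {a b a' b' : ℝ} {i j : ℕ} (hx : (x, a) ∈ G) (hy : (y, b) ∈ G) (hx' : (x', a') ∈ G)
    (hy' : (y', b') ∈ G) (hlow : x ∣ u ^ i * y) (hupp : u ^ j * x' ∣ y') :
    j * (a - b) ≤ i * (b' - a') := by
  have hdvd : x ^ j * x' ^ i ∣ y ^ j * y' ^ i :=
    calc x ^ j * x' ^ i ∣ (u ^ i * y) ^ j * x' ^ i :=
          mul_dvd_mul_right (pow_dvd_pow_of_dvd hlow j) _
      _ = y ^ j * (u ^ j * x') ^ i := by
        rw [mul_pow, mul_pow, ← pow_mul, ← pow_mul, mul_comm i j]; ac_rfl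
      _ ∣ y ^ j * y' ^ i := mul_dvd_mul_left _ (pow_dvd_pow_of_dvd hupp i)
  have := hG.mono (hG.mul_mem (hG.pow_mem hx j) (hG.pow_mem hx' i))
    (hG.mul_mem (hG.pow_mem hy j) (hG.pow_mem hy' i)) hdvd
  linarith

end IsMonoAddGraph

def adjoinGraph (G : Set (S × ℝ)) (u : S) (c : ℝ) : Set (S × ℝ) :=
  {p | ∃ x a, ∃ k : ℕ, (x, a) ∈ G ∧ p = (x * u ^ k, a + k * c)}

theorem subset_adjoinGraph (G : Set (S × ℝ)) (u : S) (c : ℝ) : G ⊆ adjoinGraph G u c :=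
  fun ⟨x, a⟩ h => ⟨x, a, 0, h, by simp⟩

namespace IsMonoAddGraph

variable [IsCancelMul S] {s₀ : S} {G : Set (S × ℝ)}

/-- The value `c` of `u` must lie above every `(a - b) / i` with `x ∣ u ^ i * y` and below every
`(b - a) / j` with `u ^ j * x ∣ y`; `mul_sub_le_mul_sub` says these constraints are compatible. -/
theorem exists_bounds (hG : IsMonoAddGraph s₀ G) {u : S} (hu : ∃ n : ℕ, u ∣ s₀ ^ n) :
    ∃ c : ℝ,
      (∀ ⦃x y a b⦄ (i : ℕ), (x, a) ∈ G → (y, b) ∈ G → x ∣ u ^ i * y → a ≤ b + i * c) ∧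
      (∀ ⦃x y a b⦄ (j : ℕ), (x, a) ∈ G → (y, b) ∈ G → u ^ j * x ∣ y → a + j * c ≤ b) := by
  set L : Set ℝ := {r | ∃ x a y b, ∃ i : ℕ, (x, a) ∈ G ∧ (y, b) ∈ G ∧ 0 < i ∧
    x ∣ u ^ i * y ∧ r = (a - b) / i}
  have hL_le : ∀ r ∈ L, ∀ ⦃x y a b⦄ (j : ℕ), (x, a) ∈ G → (y, b) ∈ G → 0 < j →
      u ^ j * x ∣ y → r ≤ (b - a) / j := by
    rintro r ⟨x', a', y', b', i, hx', hy', hi, hlow, rfl⟩ x y a b j hx hy hj hupp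
    rw [div_le_div_iff₀ (by exact_mod_cast hi) (by exact_mod_cast hj)]
    linarith [hG.mul_sub_le_mul_sub hx' hy' hx hy hlow hupp]
  have hL_ne : L.Nonempty := ⟨_, 1, 0, 1, 0, 1, hG.one_mem, hG.one_mem, one_pos, by simp, rfl⟩
  have hL_bdd : BddAbove L := by
    obtain ⟨n, hn⟩ := hu
    exact ⟨_, fun r hr => hL_le r hr 1 hG.one_mem (hG.pow_mem hG.gen_mem n) one_pos
      (by simpa using hn)⟩
  refine ⟨sSup L, fun x y a b i hx hy hlow => ?_, fun x y a b j hx hy hupp => ?_⟩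
  · rcases i.eq_zero_or_pos with rfl | hi
    · simpa using hG.mono hx hy (by simpa using hlow)
    · have := le_csSup hL_bdd ⟨x, a, y, b, i, hx, hy, hi, hlow, rfl⟩
      rw [div_le_iff₀ (by exact_mod_cast hi)] at this
      linarith
  · rcases j.eq_zero_or_pos with rfl | hj
    · simpa using hG.mono hx hy (by simpa using hupp)
    · have := csSup_le hL_ne fun r hr => hL_le r hr j hx hy hj hupp
      rw [le_div_iff₀ (by exact_mod_cast hj)] at this
      linarith

theorem adjoinGraph_of_bounds (hG : IsMonoAddGraph s₀ G) {u : S} {c : ℝ}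
    (hlow : ∀ ⦃x y a b⦄ (i : ℕ), (x, a) ∈ G → (y, b) ∈ G → x ∣ u ^ i * y → a ≤ b + i * c)
    (hupp : ∀ ⦃x y a b⦄ (j : ℕ), (x, a) ∈ G → (y, b) ∈ G → u ^ j * x ∣ y → a + j * c ≤ b) :
    IsMonoAddGraph s₀ (adjoinGraph G u c) := by
  refine ⟨subset_adjoinGraph G u c hG.one_mem, subset_adjoinGraph G u c hG.gen_mem, ?_, ?_⟩
  · rintro _ _ _ _ ⟨x, a, k, hx, h₁⟩ ⟨y, b, l, hy, h₂⟩
    obtain ⟨rfl, rfl⟩ := Prod.mk.inj h₁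
    obtain ⟨rfl, rfl⟩ := Prod.mk.inj h₂
    refine ⟨x * y, a + b, k + l, hG.mul_mem hx hy, Prod.ext ?_ ?_⟩
    · simp only [pow_add]; ac_rfl
    · push_cast; ring
  · rintro _ _ _ _ ⟨x, a, j, hx, h₁⟩ ⟨y, b, k, hy, h₂⟩ hdvd
    obtain ⟨rfl, rfl⟩ := Prod.mk.inj h₁
    obtain ⟨rfl, rfl⟩ := Prod.mk.inj h₂
    rcases le_total j k with hjk | hkj
    · obtain ⟨i, rfl⟩ := Nat.exists_eq_add_of_le hjk
      have : u ^ j * x ∣ u ^ j * (u ^ i * y) := by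
        rw [pow_add] at hdvd; convert hdvd using 1 <;> ac_rfl
      have := hlow i hx hy ((IsLeftRegular.all _).dvd_cancel_left.1 this)
      push_cast; linarith
    · obtain ⟨i, rfl⟩ := Nat.exists_eq_add_of_le hkj
      have : u ^ k * (u ^ i * x) ∣ u ^ k * y := by
        rw [pow_add] at hdvd; convert hdvd using 1 <;> ac_rfl
      have := hupp i hx hy ((IsLeftRegular.all _).dvd_cancel_left.1 this)
      push_cast; linarith

end IsMonoAddGraph

theorem exists_additive_nonneg_eq_one [IsCancelMul S] {s₀ : S} (hs₀ : ¬IsUnit s₀)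
    (harch : ∀ x : S, ∃ n : ℕ, x ∣ s₀ ^ n) :
    ∃ h : S → ℝ, (∀ x y, h (x * y) = h x + h y) ∧ (∀ x, 0 ≤ h x) ∧ h s₀ = 1 := by
  obtain ⟨G, -, hGmax⟩ := zorn_subset_nonempty {G | IsMonoAddGraph s₀ G}
    (fun c hc hchain hne => ⟨⋃₀ c, IsMonoAddGraph.sUnion hc hchain hne,
      fun _ => subset_sUnion_of_mem⟩) _ (IsMonoAddGraph.range_pow hs₀)
  have hG : IsMonoAddGraph s₀ G := hGmax.prop
  have total : ∀ u, ∃ a, (u, a) ∈ G := fun u => by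
    obtain ⟨c, hlow, hupp⟩ := hG.exists_bounds (harch u)
    refine ⟨c, hGmax.2 (hG.adjoinGraph_of_bounds hlow hupp) (subset_adjoinGraph G u c) ?_⟩
    exact ⟨1, 0, 1, hG.one_mem, by simp⟩
  choose h hh using total
  exact ⟨h, fun x y => hG.eq_of_mem (hh _) (hG.mul_mem (hh x) (hh y)),
    fun x => hG.mono hG.one_mem (hh x) (one_dvd x), hG.eq_of_mem (hh s₀) hG.gen_mem⟩

end MonoAddGraph

theorem differentiable_scPow_apply {S : Type*} (ρ : S → ℂ) (s : S) :
    Differentiable ℂ fun z => scPow ρ z s := by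
  unfold scPow
  split_ifs with h
  · exact differentiable_const 0
  · exact differentiable_id.const_cpow (Or.inl h)

section Semicharacters

variable {S : Type*} [CommMonoid S]

theorem isClosed_shat : IsClosed (Shat S) := by
  have : Shat S = {ψ : S → ℂ | ψ 1 = 1} ∩
      ((⋂ (s : S) (t : S), {ψ : S → ℂ | ψ (s * t) = ψ s * ψ t}) ∩
        ⋂ s : S, {ψ : S → ℂ | ‖ψ s‖ ≤ 1}) := by
    ext ψ; simp [Shat, Set.mem_iInter]
  rw [this]
  refine (isClosed_eq (continuous_apply 1) continuous_const).inter
    ((isClosed_iInter fun s => isClosed_iInter fun t => ?_).inter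
      (isClosed_iInter fun s => ?_))
  · exact isClosed_eq (continuous_apply _) ((continuous_apply s).mul (continuous_apply t))
  · exact isClosed_le (continuous_apply s).norm continuous_const

theorem isCompact_shat : IsCompact (Shat S) := by
  refine (isCompact_univ_pi fun _ : S => isCompact_closedBall (0 : ℂ) 1).of_isClosed_subset
    isClosed_shat fun ψ hψ => Set.mem_univ_pi.2 fun s => ?_
  simpa using hψ.2.2 s

theorem charGroup_subset_shat : charGroup S ⊆ Shat S := fun _ h => h.1

theorem isClosed_charGroup : IsClosed (charGroup S) := by
  have : charGroup S = Shat S ∩ ⋂ s : S, {ψ : S → ℂ | ‖ψ s‖ = 1} := by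
    ext ψ; simp [charGroup, Set.mem_iInter]
  rw [this]
  exact isClosed_shat.inter
    (isClosed_iInter fun s => isClosed_eq (continuous_apply s).norm continuous_const)

theorem isCompact_charGroup : IsCompact (charGroup S) :=
  isCompact_shat.of_isClosed_subset isClosed_charGroup charGroup_subset_shat

theorem one_mem_charGroup : (1 : S → ℂ) ∈ charGroup S :=
  ⟨⟨rfl, fun _ _ => (one_mul 1).symm, fun _ => by simp⟩, fun _ => by simp⟩

theorem memA_const (c : ℂ) : MemA S (fun _ => c) :=
  ⟨continuousOn_const, fun _ _ _ _ => ⟨differentiableOn_const _, continuousWithinAt_const⟩⟩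

theorem MemA.mul {f g : (S → ℂ) → ℂ} (hf : MemA S f) (hg : MemA S g) : MemA S (f * g) :=
  ⟨hf.1.mul hg.1, fun ρ hρ ψ hψ =>
    ⟨(hf.2 ρ hρ ψ hψ).1.mul (hg.2 ρ hρ ψ hψ).1, (hf.2 ρ hρ ψ hψ).2.mul (hg.2 ρ hρ ψ hψ).2⟩⟩

theorem memA_prod {ι : Type*} (u : Finset ι) {f : ι → (S → ℂ) → ℂ}
    (hf : ∀ i ∈ u, MemA S (f i)) : MemA S (∏ i ∈ u, f i) :=
  Finset.prod_induction f (MemA S) (fun _ _ => MemA.mul) (memA_const 1) hf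

theorem memA_affine_apply (s : S) (a c : ℂ) : MemA S fun ψ => a + c * ψ s := by
  refine ⟨(continuous_const.add (continuous_const.mul (continuous_apply s))).continuousOn,
    fun ρ _ ψ _ => ?_⟩
  have hd : Differentiable ℂ fun z => a + c * (scPow ρ z * ψ) s :=
    (differentiable_const a).add ((differentiable_const c).mul
      ((differentiable_scPow_apply ρ s).mul (differentiable_const _)))
  exact ⟨hd.differentiableOn, (hd.continuous.comp continuous_ofReal).continuousWithinAt⟩

theorem norm_one_add_div_two_lt_one {w : ℂ} (hw : ‖w‖ ≤ 1) (hne : w ≠ 1) :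
    ‖(1 + w) / 2‖ < 1 := by
  have hcombo : (1 + w) / 2 = (1 / 2 : ℝ) • (1 : ℂ) + (1 / 2 : ℝ) • w := by
    simp only [Complex.real_smul]; push_cast; ring
  rw [hcombo]
  exact norm_combo_lt_of_ne norm_one.le hw hne.symm (by norm_num) (by norm_num) (by norm_num)

theorem isPeakSetA_apply_eq {χ : S → ℂ} (hχ : χ ∈ charGroup S) (s : S) :
    IsPeakSetA S {ψ ∈ Shat S | ψ s = χ s} := by
  have hχs : starRingEnd ℂ (χ s) * χ s = 1 := by
    rw [Complex.conj_mul', hχ.2 s]; norm_num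
  refine ⟨fun ψ hψ => hψ.1, isClosed_shat.inter (isClosed_eq (continuous_apply s)
    continuous_const), fun ψ => (1 + starRingEnd ℂ (χ s) * ψ s) / 2, ?_, ?_, ?_⟩
  · simpa only [add_div, mul_div_right_comm] using memA_affine_apply s (1 / 2) _
  · rintro ψ ⟨-, hψs⟩
    simp [hψs, hχs]
  · rintro ψ ⟨hψ, hψs⟩
    refine norm_one_add_div_two_lt_one ?_ fun h1 => hψs ⟨hψ, ?_⟩
    · simpa [hχ.2 s] using hψ.2.2 s
    · have hχ0 : χ s ≠ 0 := norm_ne_zero_iff.1 (by rw [hχ.2 s]; exact one_ne_zero)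
      rw [← hχs] at h1
      exact mul_left_cancel₀ ((map_ne_zero _).2 hχ0) h1

theorem isPPointA_of_mem_charGroup {χ : S → ℂ} (hχ : χ ∈ charGroup S) : IsPPointA S χ := by
  refine ⟨hχ.1, Set.range fun s => {ψ ∈ Shat S | ψ s = χ s}, ?_, ?_⟩
  · rintro _ ⟨s, rfl⟩
    exact isPeakSetA_apply_eq hχ s
  · ext ψ
    simp only [Set.sInter_range, Set.mem_iInter, Set.mem_ofPred_eq, Set.mem_singleton_iff]
    refine ⟨fun h => funext fun s => (h s).2, ?_⟩
    rintro rfl s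
    exact ⟨hχ.1, rfl⟩

end Semicharacters

section Boundary
variable {S : Type*} [CommMonoid S]

theorem IsPPointA.mem_of_isClosedBoundaryA {p : S → ℂ} (hp : IsPPointA S p)
    {B : Set (S → ℂ)} (hB : IsClosedBoundaryA S B) : p ∈ B := by
  obtain ⟨hpS, Ps, hPs, hInter⟩ := hp
  have hpP : ∀ P ∈ Ps, p ∈ P := Set.mem_sInter.1 (hInter ▸ rfl)
  by_contra hpB
  have hempty : B ∩ ⋂ P : Ps, (P : Set (S → ℂ)) = ∅ := by
    rw [← Set.sInter_eq_iInter, hInter, Set.inter_singleton_eq_empty]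
    exact hpB
  obtain ⟨u, hu⟩ := (isCompact_shat.of_isClosed_subset hB.2.1 hB.1).elim_finite_subfamily_closed
    _ (fun P : Ps => (hPs P P.2).2.1) hempty
  choose f hfA hf1 hflt using fun P : Ps => (hPs P P.2).2.2
  obtain ⟨b, hbB, hbmax⟩ := hB.2.2 _ (memA_prod u fun P _ => hfA P)
  have hbS : b ∈ Shat S := hB.1 hbB
  obtain ⟨P, hPu, hbP⟩ : ∃ P ∈ u, b ∉ (P : Set (S → ℂ)) := by
    by_contra! h
    exact (Set.eq_empty_iff_forall_notMem.1 hu) b ⟨hbB, Set.mem_iInter₂.2 h⟩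
  have hfle : ∀ Q, ‖f Q b‖ ≤ 1 := fun Q => by
    by_cases hbQ : b ∈ (Q : Set (S → ℂ))
    · rw [hf1 Q b hbQ, norm_one]
    · exact (hflt Q b ⟨hbS, hbQ⟩).le
  have hgb : ‖(∏ Q ∈ u, f Q) b‖ < 1 := by
    rw [Finset.prod_apply, norm_prod, ← Finset.mul_prod_erase u _ hPu]
    calc ‖f P b‖ * ∏ Q ∈ u.erase P, ‖f Q b‖ ≤ ‖f P b‖ * 1 :=
          mul_le_mul_of_nonneg_left (Finset.prod_le_one (fun _ _ => norm_nonneg _)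
            fun Q _ => hfle Q) (norm_nonneg _)
      _ < 1 := by simpa using hflt P b ⟨hbS, hbP⟩
  have hgp : (∏ Q ∈ u, f Q) p = 1 := by
    rw [Finset.prod_apply]
    exact Finset.prod_eq_one fun Q _ => hf1 Q p (hpP Q Q.2)
  have := hbmax p hpS
  rw [hgp, norm_one] at this
  linarith

end Boundary

section PhragmenLindelof
variable {S : Type*} {r : S → ℝ}

theorem scPow_ofReal_apply {s : S} (hr : 0 < r s) (z : ℂ) :
    scPow (fun s => (r s : ℂ)) z s = (r s : ℂ) ^ z :=
  if_neg (ofReal_ne_zero.2 hr.ne')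

theorem scPow_ofReal_add_mul (hr : ∀ s, 0 < r s) (w z : ℂ) (χ : S → ℂ) :
    scPow (fun s => (r s : ℂ)) w * (scPow (fun s => (r s : ℂ)) z * χ) =
      scPow (fun s => (r s : ℂ)) (w + z) * χ := by
  funext s
  simp only [Pi.mul_apply, scPow_ofReal_apply (hr s),
    cpow_add _ _ (ofReal_ne_zero.2 (hr s).ne')]
  ring

theorem norm_scPow_ofReal_mul_apply {s : S} (hr : 0 < r s) {χ : S → ℂ} (hχ : ‖χ s‖ = 1)
    (z : ℂ) : ‖(scPow (fun s => (r s : ℂ)) z * χ) s‖ = r s ^ z.re := by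
  rw [Pi.mul_apply, norm_mul, hχ, mul_one, scPow_ofReal_apply hr,
    norm_cpow_eq_rpow_re_of_pos hr]

variable [CommMonoid S]

theorem scPow_ofReal_mul_mem_shat (hρ : (fun s => (r s : ℂ)) ∈ Shat S) (hr : ∀ s, 0 < r s)
    {χ : S → ℂ} (hχ : χ ∈ charGroup S) {z : ℂ} (hz : 0 ≤ z.re) :
    scPow (fun s => (r s : ℂ)) z * χ ∈ Shat S := by
  have hr_one : (r 1 : ℂ) = 1 := hρ.1
  have hr_mul : ∀ s t, (r (s * t) : ℂ) = r s * r t := hρ.2.1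
  refine ⟨?_, fun s t => ?_, fun s => ?_⟩
  · rw [Pi.mul_apply, scPow_ofReal_apply (hr 1), hr_one, one_cpow, hχ.1.1, mul_one]
  · simp only [Pi.mul_apply, scPow_ofReal_apply (hr _), hr_mul s t,
      mul_cpow_ofReal_nonneg (hr s).le (hr t).le, hχ.1.2.1 s t]
    ring
  · rw [norm_scPow_ofReal_mul_apply (hr s) (hχ.2 s)]
    have hr_le : r s ≤ 1 := by simpa [abs_of_pos (hr s)] using hρ.2.2 s
    exact Real.rpow_le_one (hr s).le hr_le hz

theorem scPow_ofReal_mul_mem_charGroup (hρ : (fun s => (r s : ℂ)) ∈ Shat S)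
    (hr : ∀ s, 0 < r s) {χ : S → ℂ} (hχ : χ ∈ charGroup S) {z : ℂ} (hz : z.re = 0) :
    scPow (fun s => (r s : ℂ)) z * χ ∈ charGroup S :=
  ⟨scPow_ofReal_mul_mem_shat hρ hr hχ hz.ge, fun s => by
    rw [norm_scPow_ofReal_mul_apply (hr s) (hχ.2 s), hz, Real.rpow_zero]⟩

/-- Phragmén–Lindelöf for `z ↦ f (ρ^z χ)`, which maps the imaginary axis into `X`. -/
theorem norm_apply_scPow_ofReal_mul_le {f : (S → ℂ) → ℂ} (hf : MemA S f)
    (hρ : (fun s => (r s : ℂ)) ∈ Shat S) (hr : ∀ s, 0 < r s) (hlt : ∃ s, r s < 1)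
    {χ : S → ℂ} (hχ : χ ∈ charGroup S) {m : ℝ} (hm : ∀ φ ∈ charGroup S, ‖f φ‖ ≤ m)
    {z : ℂ} (hz : 0 ≤ z.re) : ‖f (scPow (fun s => (r s : ℂ)) z * χ)‖ ≤ m := by
  set ρ : S → ℂ := fun s => (r s : ℂ)
  set Φ : ℂ → S → ℂ := fun z => scPow ρ z * χ
  have hΦS : ∀ z : ℂ, 0 ≤ z.re → Φ z ∈ Shat S := fun z => scPow_ofReal_mul_mem_shat hρ hr hχ
  obtain ⟨s₁, hs₁⟩ := hlt
  have hρA : ρ ∈ ShatPos S \ charGroup S := by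
    refine ⟨⟨hρ, fun s => ⟨ofReal_im _, (hr s).le⟩⟩, fun hX => ?_⟩
    have := hX.2 s₁
    simp only [ρ, norm_real, Real.norm_of_nonneg (hr s₁).le] at this
    exact hs₁.ne this
  have hΦA : ∀ t : ℝ, 0 < t → Φ t ∈ Shat S \ charGroup S := fun t ht =>
    ⟨hΦS t (by simpa using ht.le), fun hX => by
      have := hX.2 s₁
      rw [norm_scPow_ofReal_mul_apply (hr s₁) (hχ.2 s₁), ofReal_re] at this
      exact (Real.rpow_lt_one (hr s₁).le hs₁ ht).ne this⟩
  -- near `z₀`, `Φ z = ρ^(z - ε) (Φ ε)` with `Φ ε ∈ Ŝ ∖ X`, where generalized analyticity applies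
  have hdiff : DifferentiableOn ℂ (f ∘ Φ) {z | 0 < z.re} := by
    intro z₀ hz₀
    have hε : 0 < z₀.re / 2 := half_pos hz₀
    have hshift := (hf.2 ρ hρA _ (hΦA _ hε)).1
    have heq : f ∘ Φ =
        (fun w => f (scPow ρ w * Φ (z₀.re / 2 : ℝ))) ∘ fun w => w - (z₀.re / 2 : ℝ) := by
      funext w
      simp [Φ, ρ, scPow_ofReal_add_mul hr]
    have hmem : z₀ - (z₀.re / 2 : ℝ) ∈ {w : ℂ | 0 < w.re} := by
      simp only [Set.mem_ofPred_eq, sub_re, ofReal_re]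
      linarith
    rw [heq]
    have hopen : IsOpen {w : ℂ | 0 < w.re} := isOpen_lt continuous_const continuous_re
    exact ((hshift.differentiableAt (hopen.mem_nhds hmem)).comp z₀
      (differentiableAt_id.sub_const _)).differentiableWithinAt
  have hcont : Continuous Φ := continuous_pi fun s =>
    (differentiable_scPow_apply ρ s).continuous.mul continuous_const
  obtain ⟨M, hM⟩ := isCompact_shat.exists_bound_of_continuousOn hf.1
  refine PhragmenLindelof.right_half_plane_of_bounded_on_real (f := f ∘ Φ) ⟨hdiff, ?_⟩
    ⟨1, one_lt_two, 0, Asymptotics.IsBigO.of_bound M ?_⟩ ⟨M, ?_⟩ (fun y => ?_) hz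
  · rw [closure_setOfPred_lt_re]
    exact hf.1.comp hcont.continuousOn fun z hz => hΦS z hz
  · exact Filter.eventually_inf_principal.2 (.of_forall fun z hz => by
      simpa using hM _ (hΦS z (le_of_lt hz)))
  · exact Filter.eventually_map.2 (Filter.eventually_ge_atTop 0 |>.mono fun x hx =>
      hM _ (hΦS x (by simpa using hx)))
  · exact hm _ (scPow_ofReal_mul_mem_charGroup hρ hr hχ (by simp))

end PhragmenLindelof

section NoSimpleIdeals
variable {S : Type*} [CommMonoid S]

theorem eq_one_of_mem_of_mul_mem_iff
    (h : ∀ I : Set S, IsSimpleIdealS S I → I = Set.univ \ {1}) {F : Set S}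
    (hF : ∀ a b, a * b ∈ F ↔ a ∈ F ∧ b ∈ F) {x : S} (hx : x ∉ F) {s : S} (hs : s ∈ F) :
    s = 1 := by
  have hI : IsSimpleIdealS S Fᶜ := by
    refine ⟨⟨⟨x, hx⟩, fun hF' => ?_, fun t a ha hta => ha ((hF t a).1 hta).2⟩,
      fun a b ha hb hab => hab ((hF a b).2 ⟨not_not.1 ha, not_not.1 hb⟩)⟩
    exact (hF' ▸ Set.mem_univ s : s ∈ Fᶜ) hs
  by_contra hs1
  have : s ∈ Fᶜ := by
    rw [h _ hI]
    exact ⟨trivial, hs1⟩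
  exact this hs

variable {f : (S → ℂ) → ℂ} {m : ℝ}

theorem norm_apply_le_of_forall_ne_zero (hf : MemA S f)
    (hm : ∀ φ ∈ charGroup S, ‖f φ‖ ≤ m) {ψ : S → ℂ} (hψ : ψ ∈ Shat S)
    (hψ0 : ∀ s, ψ s ≠ 0) : ‖f ψ‖ ≤ m := by
  by_cases hX : ψ ∈ charGroup S
  · exact hm ψ hX
  set r : S → ℝ := fun s => ‖ψ s‖
  have hr : ∀ s, 0 < r s := fun s => norm_pos_iff.2 (hψ0 s)
  have hρ : (fun s => (r s : ℂ)) ∈ Shat S :=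
    ⟨by simp [r, hψ.1], fun s t => by simp [r, hψ.2.1 s t], fun s => by simpa [r] using hψ.2.2 s⟩
  have hlt : ∃ s, r s < 1 := by
    by_contra! h
    exact hX ⟨hψ, fun s => (hψ.2.2 s).antisymm (h s)⟩
  have hχ : (fun s => ψ s / r s) ∈ charGroup S := by
    have hnorm : ∀ s, ‖ψ s / r s‖ = 1 := fun s => by
      rw [norm_div, norm_real, Real.norm_of_nonneg (hr s).le, div_self (hr s).ne']
    refine ⟨⟨by simp [r, hψ.1], fun s t => ?_, fun s => (hnorm s).le⟩, hnorm⟩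
    simp only [r, hψ.2.1 s t, norm_mul, ofReal_mul, mul_div_mul_comm]
  have hpolar : scPow (fun s => (r s : ℂ)) 1 * (fun s => ψ s / r s) = ψ := by
    funext s
    rw [Pi.mul_apply, scPow_ofReal_apply (hr s), cpow_one,
      mul_div_cancel₀ _ (ofReal_ne_zero.2 (hr s).ne')]
  simpa [hpolar] using norm_apply_scPow_ofReal_mul_le hf hρ hr hlt hχ hm (z := 1) (by simp)

theorem apply_eq_zero_of_ne_one (h : ∀ I : Set S, IsSimpleIdealS S I → I = Set.univ \ {1})
    {ψ : S → ℂ} (hψ : ψ ∈ Shat S) {s₀ : S} (hψs₀ : ψ s₀ = 0) {s : S} (hs : s ≠ 1) :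
    ψ s = 0 := by
  by_contra hψs
  refine hs (eq_one_of_mem_of_mul_mem_iff h (F := {s | ψ s ≠ 0}) (fun a b => ?_)
    (not_not.2 hψs₀) hψs)
  simp [hψ.2.1 a b]

theorem exists_additive_pos_of_ne_one [IsCancelMul S]
    (h : ∀ I : Set S, IsSimpleIdealS S I → I = Set.univ \ {1}) {s₀ : S} (hs₀ : ¬IsUnit s₀) :
    ∃ g : S → ℝ, (∀ x y, g (x * y) = g x + g y) ∧ ∀ s, s ≠ 1 → 0 < g s := by
  have harch : ∀ x : S, ∃ n : ℕ, x ∣ s₀ ^ n := by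
    by_contra! hx
    obtain ⟨x, hx⟩ := hx
    have hs₀_eq := eq_one_of_mem_of_mul_mem_iff h (F := {x | ∃ n : ℕ, x ∣ s₀ ^ n})
      (fun a b => ⟨fun ⟨n, hn⟩ => ⟨⟨n, dvd_of_mul_right_dvd hn⟩, ⟨n, dvd_of_mul_left_dvd hn⟩⟩,
        fun ⟨⟨n, hn⟩, ⟨k, hk⟩⟩ => ⟨n + k, pow_add s₀ n k ▸ mul_dvd_mul hn hk⟩⟩)
      (fun ⟨n, hn⟩ => hx n hn) (show s₀ ∈ {x | ∃ n : ℕ, x ∣ s₀ ^ n} from ⟨1, by simp⟩)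
    exact hs₀ (hs₀_eq ▸ isUnit_one)
  obtain ⟨g, hg_mul, hg_nonneg, hg_s₀⟩ := exists_additive_nonneg_eq_one hs₀ harch
  refine ⟨g, hg_mul, fun s hs => (hg_nonneg s).lt_of_ne fun hgs => hs ?_⟩
  exact eq_one_of_mem_of_mul_mem_iff h (F := {s | g s = 0})
    (fun a b => by simp [hg_mul, add_eq_zero_iff_of_nonneg (hg_nonneg a) (hg_nonneg b)])
    (show s₀ ∉ {s | g s = 0} by simp [hg_s₀]) hgs.symm

theorem norm_apply_le_of_apply_eq_zero [IsCancelMul S]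
    (h : ∀ I : Set S, IsSimpleIdealS S I → I = Set.univ \ {1}) (hf : MemA S f)
    (hm : ∀ φ ∈ charGroup S, ‖f φ‖ ≤ m) {ψ : S → ℂ} (hψ : ψ ∈ Shat S) {s₀ : S}
    (hψs₀ : ψ s₀ = 0) : ‖f ψ‖ ≤ m := by
  have hs₀ : ¬IsUnit s₀ := fun hu => by
    obtain ⟨t, ht⟩ := hu.exists_right_inv
    simpa [← hψ.2.1, ht, hψ.1] using congrArg (· * ψ t) hψs₀
  have hs₀1 : s₀ ≠ 1 := fun h1 => hs₀ (h1 ▸ isUnit_one)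
  obtain ⟨g, hg_mul, hg_pos⟩ := exists_additive_pos_of_ne_one h hs₀
  have hg_one : g 1 = 0 := by simpa using hg_mul 1 1
  set r : S → ℝ := fun s => Real.exp (-g s)
  have hr : ∀ s, 0 < r s := fun s => Real.exp_pos _
  have hr_lt : ∀ s, s ≠ 1 → r s < 1 := fun s hs => Real.exp_lt_one_iff.2 (by linarith [hg_pos s hs])
  have hρ : (fun s => (r s : ℂ)) ∈ Shat S := by
    refine ⟨by simp [r, hg_one], fun s t => ?_, fun s => ?_⟩
    · simp only [r, hg_mul, neg_add, Real.exp_add, ofReal_mul]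
    · rw [norm_real, Real.norm_of_nonneg (hr s).le]
      rcases eq_or_ne s 1 with rfl | hs
      · simp [r, hg_one]
      · exact (hr_lt s hs).le
  have htend : Tendsto (fun t : ℝ => scPow (fun s => (r s : ℂ)) t * 1) atTop (𝓝 ψ) := by
    refine tendsto_pi_nhds.2 fun s => ?_
    simp only [Pi.mul_apply, Pi.one_apply, mul_one, scPow_ofReal_apply (hr s)]
    rcases eq_or_ne s 1 with rfl | hs
    · simp [r, hg_one, hψ.1]
    · rw [apply_eq_zero_of_ne_one h hψ hψs₀ hs]
      refine ((tendsto_rpow_atTop_of_base_lt_one _ (by linarith [hr s]) (hr_lt s hs)).ofReal).congr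
        fun t => ?_
      simp only [ofReal_cpow (hr s).le]
  have hshat : ∀ᶠ t : ℝ in atTop, scPow (fun s => (r s : ℂ)) t * 1 ∈ Shat S :=
    (eventually_ge_atTop 0).mono fun t ht =>
      scPow_ofReal_mul_mem_shat hρ hr one_mem_charGroup (by simpa using ht)
  refine le_of_tendsto ((hf.1 ψ hψ).tendsto.comp (tendsto_nhdsWithin_iff.2 ⟨htend, hshat⟩)).norm
    ((eventually_ge_atTop 0).mono fun t ht => ?_)
  exact norm_apply_scPow_ofReal_mul_le hf hρ hr ⟨s₀, hr_lt s₀ hs₀1⟩ one_mem_charGroup hm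
    (by simpa using ht)

theorem charGroup_isClosedBoundaryA [IsCancelMul S]
    (h : ∀ I : Set S, IsSimpleIdealS S I → I = Set.univ \ {1}) :
    IsClosedBoundaryA S (charGroup S) := by
  refine ⟨charGroup_subset_shat, isClosed_charGroup, fun f hf => ?_⟩
  obtain ⟨χ₀, hχ₀, hmax⟩ := isCompact_charGroup.exists_isMaxOn ⟨1, one_mem_charGroup⟩
    (hf.1.mono charGroup_subset_shat).norm
  refine ⟨χ₀, hχ₀, fun ψ hψ => ?_⟩
  by_cases hψ0 : ∀ s, ψ s ≠ 0
  · exact norm_apply_le_of_forall_ne_zero hf hmax hψ hψ0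
  · push Not at hψ0
    obtain ⟨s₀, hs₀⟩ := hψ0
    exact norm_apply_le_of_apply_eq_zero h hf hmax hψ hs₀

end NoSimpleIdeals

/-- If `S` contains no nontrivial simple ideals (every simple ideal
equals `S ∖ {e}`), then the strong boundary and the Shilov boundary of `A(Ŝ)` both
coincide with the character group `X`. -/
theorem stmt15 {S : Type*} [CommMonoid S] [IsCancelMul S]
    (h : ∀ I : Set S, IsSimpleIdealS S I → I = Set.univ \ {1}) :
    strongBoundary S = charGroup S ∧ shilovA S = charGroup S := by
  have hX : IsClosedBoundaryA S (charGroup S) := charGroup_isClosedBoundaryA h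
  have hXΓ : charGroup S ⊆ strongBoundary S := fun _ => isPPointA_of_mem_charGroup
  refine ⟨Set.Subset.antisymm (fun p hp => IsPPointA.mem_of_isClosedBoundaryA hp hX) hXΓ,
    Set.Subset.antisymm (Set.sInter_subset_of_mem hX) fun χ hχ => ?_⟩
  exact Set.mem_sInter.2 fun B hB => IsPPointA.mem_of_isClosedBoundaryA (hXΓ hχ) hB
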